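/- arXiv:2405.05195 — 6 statements merged into one kernel-verified Lean document; each statement's English description precedes it below -/
import Mathlib

section
/- If a graph G has at least two edges and Player 1 has a winning strategy in Trail Trap on G whose first move is u → v, then the degree of v in G is at least 3. In particular, every P1-win graph with at least two edges has maximum degree at least 3. -/
open SimpleGraph

/-- A valid partial play of Trail Trap: a list of moves (directed edges), where each
move is along an edge of `G`, no edge (as an unordered pair) is used twice, and each
player's moves form a trail (move `i+2` starts where move `i` ended). Moves at even
indices belong to Player 1 and moves at odd indices to Player 2. -/
def ValidPlay {V : Type*} (G : SimpleGraph V) (l : List (V × V)) : Prop :=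
  (∀ m ∈ l, G.Adj m.1 m.2) ∧
  (l.map (fun m => s(m.1, m.2))).Nodup ∧
  ∀ (i : ℕ) (h : i + 2 < l.length),
    (l.get ⟨i + 2, h⟩).1 = (l.get ⟨i, by omega⟩).2

/-- The play `l` follows strategy `σ` on all turns with index `≡ t (mod 2)`. -/
def FollowsAt {V : Type*} (σ : List (V × V) → V × V) (t : ℕ) (l : List (V × V)) : Prop :=
  ∀ (i : ℕ) (h : i < l.length), i % 2 = t → l.get ⟨i, h⟩ = σ (l.take i)

/-- Player 1 has a winning strategy in Trail Trap on `G`: a strategy `σ` for the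
even-indexed moves such that every `σ`-consistent valid play that cannot be
`σ`-consistently extended has odd length (i.e. Player 2 is the one stuck). -/
def P1Win {V : Type*} (G : SimpleGraph V) : Prop :=
  ∃ σ : List (V × V) → V × V, ∀ l : List (V × V),
    ValidPlay G l → FollowsAt σ 0 l →
    (∀ m : V × V, ¬ (ValidPlay G (l ++ [m]) ∧ FollowsAt σ 0 (l ++ [m]))) →
    l.length % 2 = 1

/-- Player 2 has a winning strategy in Trail Trap on `G`. -/
def P2Win {V : Type*} (G : SimpleGraph V) : Prop :=
  ∃ σ : List (V × V) → V × V, ∀ l : List (V × V),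
    ValidPlay G l → FollowsAt σ 1 l →
    (∀ m : V × V, ¬ (ValidPlay G (l ++ [m]) ∧ FollowsAt σ 1 (l ++ [m]))) →
    l.length % 2 = 0

/-- Player 1 has a winning strategy in Trail Trap on `G` whose first move is `u → v`. -/
def P1WinFrom {V : Type*} (G : SimpleGraph V) (u v : V) : Prop :=
  ∃ σ : List (V × V) → V × V, σ [] = (u, v) ∧ ∀ l : List (V × V),
    ValidPlay G l → FollowsAt σ 0 l →
    (∀ m : V × V, ¬ (ValidPlay G (l ++ [m]) ∧ FollowsAt σ 0 (l ++ [m]))) →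
    l.length % 2 = 1

/-- Player 2 has a winning strategy in Trail Trap on `G`, given that Player 1's first
move was `u → v`. -/
def P2WinAfter {V : Type*} (G : SimpleGraph V) (u v : V) : Prop :=
  ∃ σ : List (V × V) → V × V, ∀ l : List (V × V),
    l.head? = some (u, v) → ValidPlay G l → FollowsAt σ 1 l →
    (∀ m : V × V, ¬ (ValidPlay G (l ++ [m]) ∧ FollowsAt σ 1 (l ++ [m]))) →
    l.length % 2 = 0

/-- If `G` has at least two edges and Player 1 has a winning strategy whose first move
is `u → v`, then `deg v ≥ 3`; in particular the maximum degree of `G` is at least 3. -/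
theorem stmt_4 {V : Type*} [Fintype V] [DecidableEq V] (G : SimpleGraph V)
    [DecidableRel G.Adj] (h2 : 2 ≤ G.edgeFinset.card) (u v : V)
    (h : P1WinFrom G u v) :
    3 ≤ G.degree v ∧ 3 ≤ G.maxDegree := by
  obtain ⟨σ, hσ0, hσ⟩ := h
  -- First, the opening move must be along an edge.
  have huv : G.Adj u v := by
    by_contra hne
    have h0 := hσ [] ⟨by simp, by simp, by intro i hi; simp at hi⟩
      (by intro i hi; simp at hi) ?_
    · simp at h0
    · rintro m ⟨hvp, hf⟩
      have hm : m = (u, v) := by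
        have := hf 0 (by simp) (by simp)
        simpa [hσ0] using this
      have hadj := hvp.1 m (by simp)
      rw [hm] at hadj
      exact hne hadj
  have hv3 : 3 ≤ G.degree v := by
    by_contra hlt
    push_neg at hlt
    -- Choose Player 2's blocking move m₂.
    obtain ⟨m₂, hadj₂, hne₂, hblock⟩ :
        ∃ m₂ : V × V, G.Adj m₂.1 m₂.2 ∧ s(m₂.1, m₂.2) ≠ s(u, v) ∧
          ∀ x, G.Adj v x → s(x, v) = s(u, v) ∨ s(x, v) = s(m₂.1, m₂.2) := by
      by_cases hw : ∃ w, w ≠ u ∧ G.Adj v w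
      · obtain ⟨w, hwu, hvw⟩ := hw
        refine ⟨(w, v), hvw.symm, ?_, ?_⟩
        · intro heq
          rcases Sym2.eq_iff.mp heq with ⟨h1, -⟩ | ⟨h1, h2⟩
          · exact hwu h1
          · exact G.irrefl (h1 ▸ hvw)
        · intro x hvx
          -- neighborFinset v = {u, w}
          have hsub : ({u, w} : Finset V) ⊆ G.neighborFinset v := by
            intro a ha
            simp only [Finset.mem_insert, Finset.mem_singleton] at ha
            rcases ha with rfl | rfl
            · exact (G.mem_neighborFinset _ _).2 huv.symm
            · exact (G.mem_neighborFinset _ _).2 hvw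
          have hcard : ({u, w} : Finset V).card = 2 := by
            rw [Finset.card_insert_of_notMem (by simpa using fun h => hwu h.symm)]
            simp
          have heq : ({u, w} : Finset V) = G.neighborFinset v := by
            apply Finset.eq_of_subset_of_card_le hsub
            rw [hcard]
            rw [G.card_neighborFinset_eq_degree v]
            omega
          have hx : x ∈ ({u, w} : Finset V) := by
            rw [heq]; exact (G.mem_neighborFinset v x).2 hvx
          simp only [Finset.mem_insert, Finset.mem_singleton] at hx
          rcases hx with hxe | hxe
          · left; rw [hxe]
          · right; rw [hxe]
      · push_neg at hw
        obtain ⟨e, he, hene⟩ :=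
          Finset.exists_mem_ne (s := G.edgeFinset) (by omega) s(u, v)
        induction e using Sym2.ind with
        | _ a b =>
          rw [mem_edgeFinset, mem_edgeSet] at he
          refine ⟨(a, b), he, hene, ?_⟩
          intro x hvx
          left
          have : x = u := by
            by_contra hxu
            exact hw x hxu hvx
          subst this
          rfl
    -- The play [(u,v), m₂] is valid, follows σ, and is maximal.
    set l : List (V × V) := [(u, v), m₂] with hl
    have hvp : ValidPlay G l := by
      refine ⟨?_, ?_, ?_⟩
      · intro m hm
        simp only [hl, List.mem_cons, List.mem_singleton, List.not_mem_nil, or_false] at hm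
        rcases hm with rfl | rfl
        · exact huv
        · exact hadj₂
      · simp [hl, Ne.symm hne₂]
      · intro i hi; simp [hl] at hi
    have hf : FollowsAt σ 0 l := by
      intro i hi hpar
      have hi2 : i < 2 := by simpa [hl] using hi
      interval_cases i
      · simp [hl, hσ0]
      · simp at hpar
    have h2' := hσ l hvp hf ?_
    · rw [hl] at h2'; simp at h2'
    · rintro m ⟨⟨hadj, hnd, htr⟩, -⟩
      have hlen : 0 + 2 < (l ++ [m]).length := by simp [hl]
      have h1 : m.1 = v := by
        have := htr 0 hlen
        simpa [hl] using this
      have hadjm : G.Adj v m.2 := by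
        have := hadj m (by simp)
        rwa [h1] at this
      have hnd' : s(m.1, m.2) ≠ s(u, v) ∧ s(m.1, m.2) ≠ s(m₂.1, m₂.2) := by
        have : ((l ++ [m]).map (fun m => s(m.1, m.2))).Nodup := hnd
        simp only [hl, List.map_append, List.map_cons, List.map_nil] at this
        constructor
        · intro heq
          simp [heq] at this
        · intro heq
          simp [heq] at this
      have := hblock m.2 hadjm
      rw [h1] at hnd'
      rcases this with heq | heq
      · exact hnd'.1 (by rw [← heq]; exact Sym2.eq_swap)
      · exact hnd'.2 (by rw [← heq]; exact Sym2.eq_swap)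
  exact ⟨hv3, hv3.trans (G.degree_le_maxDegree v)⟩
end

section
/- Every finite simple graph with maximum degree at most 2 and at least two edges (in particular, every path with at least two edges and every cycle) is P2-win in Trail Trap. -/
open SimpleGraph

/-! Player 2 answers Player 1's opening move `u → v` by taking the other edge at `v` if there is
one, and any other edge otherwise. As `v` has degree at most 2, Player 1 then has no unused edge
at `v` and is stuck on the third move. -/

namespace TrailTrap

variable {V : Type*} {G : SimpleGraph V}

def IsBlockingReply (G : SimpleGraph V) (u v : V) (r : V × V) : Prop :=
  G.Adj r.1 r.2 ∧ s(r.1, r.2) ≠ s(u, v) ∧ ∀ x, G.Adj v x → x = u ∨ s(v, x) = s(r.1, r.2)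

theorem exists_isBlockingReply {u v : V} [Fintype (G.neighborSet v)] [Fintype G.edgeSet]
    (hv : G.degree v ≤ 2) (h2 : 2 ≤ G.edgeFinset.card) (huv : G.Adj u v) :
    ∃ r, IsBlockingReply G u v r := by
  by_cases hw : ∃ w, w ≠ u ∧ G.Adj v w
  · obtain ⟨w, hwu, hvw⟩ := hw
    refine ⟨(v, w), hvw, fun h => ?_, fun x hvx => ?_⟩
    · rcases Sym2.eq_iff.mp h with ⟨rfl, -⟩ | ⟨-, rfl⟩
      exacts [G.loopless.irrefl _ huv, hwu rfl]
    · by_contra! hx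
      have : 2 < (G.neighborFinset v).card := Finset.two_lt_card.mpr
        ⟨u, by simpa using huv.symm, w, by simpa using hvw, x, by simpa using hvx,
          hwu.symm, hx.1.symm, fun hwx => hx.2 (by rw [hwx])⟩
      rw [card_neighborFinset_eq_degree] at this
      omega
  · simp only [not_exists, not_and] at hw
    obtain ⟨e, he, hne⟩ := Finset.exists_mem_ne (s := G.edgeFinset) (by omega) s(u, v)
    induction e using Sym2.ind with
    | _ a b =>
      refine ⟨(a, b), by simpa using he, hne, fun x hvx => Or.inl ?_⟩
      by_contra hxu
      exact hw x hxu hvx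

theorem validPlay_pair {a b : V × V} (ha : G.Adj a.1 a.2) (hb : G.Adj b.1 b.2)
    (hab : s(b.1, b.2) ≠ s(a.1, a.2)) : ValidPlay G [a, b] := by
  refine ⟨?_, ?_, fun i hi => by simp at hi⟩
  · simp [ha, hb]
  · simpa using hab.symm

theorem not_validPlay_of_isBlockingReply {a b c : V × V} {t : List (V × V)}
    (hb : IsBlockingReply G a.1 a.2 b) : ¬ ValidPlay G (a :: b :: c :: t) := by
  rintro ⟨hadj, hnodup, htrail⟩
  have hc : c.1 = a.2 := htrail 0 (by simp)
  simp only [List.map_cons, List.nodup_cons, List.mem_cons, not_or] at hnodup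
  obtain ⟨⟨-, hac, -⟩, ⟨hbc, -⟩, -⟩ := hnodup
  have hcadj : G.Adj a.2 c.2 := hc ▸ hadj c (by simp)
  rcases hb.2.2 c.2 hcadj with hca | hcb
  · exact hac (by rw [hc, hca, Sym2.eq_swap])
  · exact hbc (by rw [← hcb, hc])

theorem p2Win_of_forall_exists_isBlockingReply [Nonempty V]
    (h : ∀ u v, G.Adj u v → ∃ r, IsBlockingReply G u v r) : P2Win G := by
  classical
  let reply (m : V × V) : V × V := if hm : G.Adj m.1 m.2 then (h _ _ hm).choose else m
  have reply_spec {m : V × V} (hm : G.Adj m.1 m.2) : IsBlockingReply G m.1 m.2 (reply m) := by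
    simpa [reply, hm] using (h _ _ hm).choose_spec
  let σ : List (V × V) → V × V
    | [] => Classical.arbitrary _ -- never consulted: Player 2 moves only after Player 1
    | m :: _ => reply m
  refine ⟨σ, fun l hl hσ hstuck => ?_⟩
  match l with
  | [] | [_, _] => simp
  | [a] =>
    have ha : G.Adj a.1 a.2 := hl.1 a (by simp)
    obtain ⟨hr, hra, -⟩ := reply_spec ha
    refine absurd ⟨validPlay_pair ha hr hra, fun i hi hodd => ?_⟩ (hstuck (reply a))
    obtain rfl : i = 1 := by simp at hi; omega
    rfl
  | a :: b :: c :: t =>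
    have hb : b = reply a := hσ 1 (by simp) rfl
    exact absurd hl (not_validPlay_of_isBlockingReply (hb ▸ reply_spec (hl.1 a (by simp))))

end TrailTrap

open TrailTrap in
theorem stmt_5_general {V : Type*} [Fintype V] (G : SimpleGraph V)
    [DecidableRel G.Adj] (hdeg : G.maxDegree ≤ 2) (h2 : 2 ≤ G.edgeFinset.card) :
    P2Win G := by
  obtain ⟨e, -⟩ := Finset.card_pos.mp (show 0 < G.edgeFinset.card by omega)
  have : Nonempty V := ⟨e.out.1⟩
  exact p2Win_of_forall_exists_isBlockingReply fun u v huv =>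
    exists_isBlockingReply ((G.degree_le_maxDegree v).trans hdeg) h2 huv

/-- Every finite graph with maximum degree at most 2 and at least two edges is
P2-win in Trail Trap. -/
theorem stmt_5 {V : Type*} [Fintype V] [DecidableEq V] (G : SimpleGraph V)
    [DecidableRel G.Adj] (hdeg : G.maxDegree ≤ 2) (h2 : 2 ≤ G.edgeFinset.card) :
    P2Win G :=
  stmt_5_general G hdeg h2
end

section
/- Player 1 has a winning strategy in Trail Trap on the complete graph K₄. -/
open SimpleGraph

/-! Every move uses up one of the six edges of K₄, so a play lasts at most six moves. Player 1
opens along the edge 01 and then answers according to a fixed table. Against this strategy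
the tree of possible plays is small (Player 1's moves are forced, Player 2's range over all
legal moves), and a finite check over this tree shows that Player 1's prescribed move is legal
whenever it is Player 1's turn; hence Player 2 is always the one who gets stuck. -/

variable {V : Type*} {G : SimpleGraph V}

theorem ValidPlay.of_append {l l' : List (V × V)} (h : ValidPlay G (l ++ l')) :
    ValidPlay G l := by
  obtain ⟨hadj, hnodup, htrail⟩ := h
  refine ⟨fun m hm => hadj m (List.mem_append_left _ hm), ?_, fun i hi => ?_⟩
  · rw [List.map_append] at hnodup
    exact hnodup.of_append_left
  · have := htrail i (by simp; omega)
    simp only [List.get_eq_getElem, List.getElem_append_left hi,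
      List.getElem_append_left (show i < l.length by omega)] at this ⊢
    exact this

theorem ValidPlay.length_le [Fintype G.edgeSet] [DecidableEq V] {l : List (V × V)}
    (h : ValidPlay G l) : l.length ≤ G.edgeFinset.card := by
  obtain ⟨hadj, hnodup, -⟩ := h
  calc l.length = (l.map fun m => s(m.1, m.2)).toFinset.card := by
        rw [List.toFinset_card_of_nodup hnodup, List.length_map]
    _ ≤ G.edgeFinset.card := Finset.card_le_card fun e he => by
        obtain ⟨m, hm, rfl⟩ := List.mem_map.1 (List.mem_toFinset.1 he)
        exact G.mem_edgeFinset.2 (hadj m hm)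

theorem FollowsAt.of_append {σ : List (V × V) → V × V} {t : ℕ} {l l' : List (V × V)}
    (h : FollowsAt σ t (l ++ l')) : FollowsAt σ t l := by
  intro i hi ht
  have := h i (by simp; omega) ht
  simp only [List.get_eq_getElem, List.getElem_append_left hi,
    List.take_append_of_le_length hi.le] at this ⊢
  exact this

theorem FollowsAt.append_self {σ : List (V × V) → V × V} {t : ℕ} {l : List (V × V)}
    (h : FollowsAt σ t l) : FollowsAt σ t (l ++ [σ l]) := by
  intro i hi ht
  rcases Nat.lt_succ_iff_lt_or_eq.1 (by simpa using hi) with hil | rfl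
  · have := h i hil ht
    simp only [List.get_eq_getElem, List.getElem_append_left hil,
      List.take_append_of_le_length hil.le] at this ⊢
    exact this
  · simp

theorem FollowsAt.eq_of_append {σ : List (V × V) → V × V} {t : ℕ} {l : List (V × V)}
    {m : V × V} (h : FollowsAt σ t (l ++ [m])) (ht : l.length % 2 = t) : m = σ l := by
  simpa using h l.length (by simp) ht

theorem p1Win_of_forall_validPlay_append (σ : List (V × V) → V × V)
    (h : ∀ l, ValidPlay G l → FollowsAt σ 0 l → l.length % 2 = 0 → ValidPlay G (l ++ [σ l])) :
    P1Win G := by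
  refine ⟨σ, fun l hv hf hstuck => ?_⟩
  by_contra hodd
  have heven : l.length % 2 = 0 := by omega
  exact hstuck (σ l) ⟨h l hv hf heven, hf.append_self⟩

-- The trail condition is restated with a bounded quantifier `∀ i < n`, which is decidable.
instance [DecidableEq V] [DecidableRel G.Adj] : DecidablePred (ValidPlay G) := fun l =>
  decidable_of_iff ((∀ m ∈ l, G.Adj m.1 m.2) ∧ (l.map fun m => s(m.1, m.2)).Nodup ∧
      ∀ (i : ℕ) (h : i < l.length - 2), (l[i + 2]).1 = (l[i]).2) <| by
    unfold ValidPlay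
    exact and_congr_right fun _ => and_congr_right fun _ =>
      ⟨fun H i _ => H i (by omega), fun H i _ => H i (by omega)⟩

section Enumeration

variable (G : SimpleGraph V) [DecidablePred (ValidPlay G)]

def consistentPlays (σ : List (V × V) → V × V) (moves : List (V × V)) :
    ℕ → List (List (V × V))
  | 0 => [[]]
  | n + 1 => (consistentPlays σ moves n).flatMap fun l =>
      ((if l.length % 2 = 0 then [σ l] else moves).filter
        fun m => ValidPlay G (l ++ [m])).map (l ++ [·])

variable {G}

theorem mem_consistentPlays {σ : List (V × V) → V × V} {moves : List (V × V)}
    (hmoves : ∀ m : V × V, G.Adj m.1 m.2 → m ∈ moves) {l : List (V × V)}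
    (hv : ValidPlay G l) (hf : FollowsAt σ 0 l) :
    l ∈ consistentPlays G σ moves l.length := by
  induction l using List.reverseRecOn with
  | nil => simp [consistentPlays]
  | append_singleton l m ih =>
    rw [List.length_append, List.length_singleton, consistentPlays, List.mem_flatMap]
    refine ⟨l, ih hv.of_append hf.of_append,
      List.mem_map.2 ⟨m, List.mem_filter.2 ⟨?_, by simpa⟩, rfl⟩⟩
    split_ifs with heven
    · exact List.mem_singleton.2 (hf.eq_of_append heven)
    · exact hmoves m (hv.1 m (by simp))

end Enumeration

def k4StrategyTable : List (List (Fin 4 × Fin 4) × (Fin 4 × Fin 4)) := [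
  ([], (0,1)),
  ([(0,1), (0,2)], (1,3)),
  ([(0,1), (0,2), (1,3), (2,1)], (3,0)),
  ([(0,1), (0,2), (1,3), (2,3)], (3,0)),
  ([(0,1), (0,3)], (1,2)),
  ([(0,1), (0,3), (1,2), (3,1)], (2,0)),
  ([(0,1), (0,3), (1,2), (3,2)], (2,0)),
  ([(0,1), (1,2)], (1,3)),
  ([(0,1), (1,2), (1,3), (2,0)], (3,0)),
  ([(0,1), (1,2), (1,3), (2,3)], (3,0)),
  ([(0,1), (1,3)], (1,2)),
  ([(0,1), (1,3), (1,2), (3,0)], (2,0)),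
  ([(0,1), (1,3), (1,2), (3,2)], (2,0)),
  ([(0,1), (2,0)], (1,3)),
  ([(0,1), (2,0), (1,3), (0,3)], (3,2)),
  ([(0,1), (2,1)], (1,3)),
  ([(0,1), (2,3)], (1,2)),
  ([(0,1), (2,3), (1,2), (3,0)], (2,0)),
  ([(0,1), (2,3), (1,2), (3,1)], (2,0)),
  ([(0,1), (3,0)], (1,2)),
  ([(0,1), (3,0), (1,2), (0,2)], (2,3)),
  ([(0,1), (3,1)], (1,2)),
  ([(0,1), (3,2)], (1,3)),
  ([(0,1), (3,2), (1,3), (2,0)], (3,0)),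
  ([(0,1), (3,2), (1,3), (2,1)], (3,0))]

-- Keyed by the whole history; histories missing from the table never arise in play following it.
def k4Strategy (l : List (Fin 4 × Fin 4)) : Fin 4 × Fin 4 :=
  (k4StrategyTable.lookup l).getD (0, 1)

theorem validPlay_append_k4Strategy : ∀ n < 7, n % 2 = 0 →
    ∀ l ∈ consistentPlays ⊤ k4Strategy (List.finRange 4 ×ˢ List.finRange 4) n,
      ValidPlay (⊤ : SimpleGraph (Fin 4)) (l ++ [k4Strategy l]) := by
  decide

/-- Player 1 has a winning strategy in Trail Trap on the complete graph `K₄`. -/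
theorem stmt_6 : P1Win (⊤ : SimpleGraph (Fin 4)) := by
  refine p1Win_of_forall_validPlay_append k4Strategy fun l hv hf heven => ?_
  have hlen : l.length ≤ 6 := by
    simpa [Nat.choose] using hv.length_le.trans_eq card_edgeFinset_top_eq_card_choose_two
  have hmoves (m : Fin 4 × Fin 4) : m ∈ List.finRange 4 ×ˢ List.finRange 4 :=
    List.mem_product.2 ⟨List.mem_finRange _, List.mem_finRange _⟩
  exact validPlay_append_k4Strategy l.length (by omega) heven l
    (mem_consistentPlays (fun m _ => hmoves m) hv hf)
end

section
/- Player 2 has a winning strategy in Trail Trap on the complete graph K₅. -/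
open SimpleGraph

/-!
A play of Trail Trap on `K₅` lasts at most ten moves, so the game tree can be searched
exhaustively. If Player 2 can force Player 1 to be stuck within a bounded number of moves, then
always answering with a reply that preserves such a forced win is a winning strategy. For `K₅`
the forced win is certified by kernel evaluation of a bounded search in which the used edges are
kept as a bit mask.
-/

namespace TrailTrap

section Play

variable {V : Type*} {G : SimpleGraph V}

def nextStart (l : List (V × V)) : Option V := l.reverse[1]?.map Prod.snd

def lastEnd (l : List (V × V)) : Option V := l.reverse[0]?.map Prod.snd

@[simp]
theorem nextStart_append (l : List (V × V)) (a : V × V) :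
    nextStart (l ++ [a]) = lastEnd l := by
  simp [nextStart, lastEnd]

@[simp]
theorem lastEnd_append (l : List (V × V)) (a : V × V) : lastEnd (l ++ [a]) = some a.2 := by
  simp [lastEnd]

theorem mem_nextStart_iff {l : List (V × V)} {v : V} :
    v ∈ nextStart l ↔ ∃ h : 2 ≤ l.length, l[l.length - 2].2 = v := by
  simp only [nextStart, Option.mem_def, Option.map_eq_some_iff, List.getElem?_eq_some_iff,
    List.length_reverse, List.getElem_reverse]
  constructor
  · rintro ⟨m, ⟨h, rfl⟩, rfl⟩
    exact ⟨h, rfl⟩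
  · rintro ⟨h, rfl⟩
    exact ⟨_, ⟨h, rfl⟩, rfl⟩

theorem validPlay_append_iff {l : List (V × V)} {a : V × V} :
    ValidPlay G (l ++ [a]) ↔ ValidPlay G l ∧ G.Adj a.1 a.2 ∧
      s(a.1, a.2) ∉ l.map (fun m => s(m.1, m.2)) ∧ ∀ v ∈ nextStart l, a.1 = v := by
  have trail : (∀ i (h : i + 2 < (l ++ [a]).length), (l ++ [a])[i + 2].1 = (l ++ [a])[i].2) ↔
      (∀ i (h : i + 2 < l.length), l[i + 2].1 = l[i].2) ∧ ∀ v ∈ nextStart l, a.1 = v := by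
    simp only [mem_nextStart_iff, forall_exists_index]
    constructor
    · intro h
      refine ⟨fun i hi => ?_, ?_⟩
      · have := h i (by simp only [List.length_append, List.length_singleton]; omega)
        rwa [List.getElem_append_left hi, List.getElem_append_left (by omega)] at this
      · rintro _ h2 rfl
        have := h (l.length - 2) (by simp only [List.length_append, List.length_singleton]; omega)
        rw [List.getElem_append_right (by omega), List.getElem_append_left (by omega)] at this
        simpa [show l.length - 2 + 2 - l.length = 0 by omega] using this
    · rintro ⟨hl, ha⟩ i hi
      rw [List.length_append, List.length_singleton] at hi
      rw [List.getElem_append_left (show i < l.length by omega)]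
      rcases Nat.lt_or_ge (i + 2) l.length with hlt | hge
      · rw [List.getElem_append_left hlt]
        exact hl i hlt
      · rw [List.getElem_append_right hge]
        have hi' : l.length - 2 = i := by omega
        simpa [show i + 2 - l.length = 0 by omega, hi'] using ha _ (by omega) rfl
  have fresh : (∀ e ∈ l.map (fun m => s(m.1, m.2)), e ≠ s(a.1, a.2)) ↔
      s(a.1, a.2) ∉ l.map (fun m => s(m.1, m.2)) :=
    ⟨fun h hs => h _ hs rfl, fun h e he hea => h (hea ▸ he)⟩
  simp only [ValidPlay, List.get_eq_getElem, trail, List.mem_append, List.mem_singleton, or_imp,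
    forall_and, forall_eq, List.map_append, List.map_cons, List.map_nil, List.nodup_append,
    List.nodup_singleton, true_and]
  tauto

theorem followsAt_append_iff {σ : List (V × V) → V × V} {t : ℕ} {l : List (V × V)}
    {a : V × V} :
    FollowsAt σ t (l ++ [a]) ↔ FollowsAt σ t l ∧ (l.length % 2 = t → a = σ l) := by
  simp only [FollowsAt, List.get_eq_getElem, List.length_append, List.length_singleton]
  constructor
  · intro h
    refine ⟨fun i hi ht => ?_, fun ht => ?_⟩
    · simpa [List.getElem_append_left hi, List.take_append_of_le_length hi.le] using
        h i (by omega) ht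
    · simpa using h l.length (by omega) ht
  · rintro ⟨hl, ha⟩ i hi ht
    rcases Nat.lt_or_ge i l.length with hlt | hge
    · simpa [List.getElem_append_left hlt, List.take_append_of_le_length hlt.le] using hl i hlt ht
    · obtain rfl : i = l.length := by omega
      simpa using ha ht

def P2ForcesWithin (G : SimpleGraph V) : ℕ → List (V × V) → Prop
  | 0, _ => False
  | f + 1, l =>
    if l.length % 2 = 1 then ∃ a, ValidPlay G (l ++ [a]) ∧ P2ForcesWithin G f (l ++ [a])
    else ∀ a, ValidPlay G (l ++ [a]) → P2ForcesWithin G f (l ++ [a])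

theorem p2Win_of_p2ForcesWithin [Nonempty V] {f : ℕ} (h : P2ForcesWithin G f []) :
    P2Win G := by
  let good l := ∃ f, P2ForcesWithin G f l
  let σ l := Classical.epsilon fun a => ValidPlay G (l ++ [a]) ∧ good (l ++ [a])
  have reply : ∀ l, good l → l.length % 2 = 1 →
      ValidPlay G (l ++ [σ l]) ∧ good (l ++ [σ l]) := by
    rintro l ⟨_ | f, hf⟩ hodd
    · exact hf.elim
    · rw [P2ForcesWithin, if_pos hodd] at hf
      obtain ⟨a, ha, hfa⟩ := hf
      exact Classical.epsilon_spec (p := fun a => ValidPlay G (l ++ [a]) ∧ good (l ++ [a]))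
        ⟨a, ha, _, hfa⟩
  have inv : ∀ l, ValidPlay G l → FollowsAt σ 1 l → good l := by
    intro l
    induction l using List.reverseRecOn with
    | nil => exact fun _ _ => ⟨f, h⟩
    | append_singleton l a ih =>
      intro hV hF
      rw [followsAt_append_iff] at hF
      have hl := ih (validPlay_append_iff.mp hV).1 hF.1
      by_cases hodd : l.length % 2 = 1
      · rw [hF.2 hodd]
        exact (reply l hl hodd).2
      · obtain ⟨_ | f, hf⟩ := hl
        · exact hf.elim
        · rw [P2ForcesWithin, if_neg hodd] at hf
          exact ⟨f, hf a hV⟩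
  refine ⟨σ, fun l hV hF hstuck => ?_⟩
  by_contra hodd
  replace hodd : l.length % 2 = 1 := by omega
  exact hstuck (σ l)
    ⟨(reply l (inv l hV hF) hodd).1, followsAt_append_iff.mpr ⟨hF, fun _ => rfl⟩⟩

end Play

section Search

variable {n : ℕ} (G : SimpleGraph (Fin n)) [DecidableRel G.Adj]

def edgeIndex (a b : Fin n) : ℕ := finProdFinEquiv (a, b)

def edgeBits (a b : Fin n) : ℕ := 2 ^ edgeIndex a b ||| 2 ^ edgeIndex b a

def usedMask (l : List (Fin n × Fin n)) : ℕ :=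
  l.foldl (fun mask m => mask ||| edgeBits m.1 m.2) 0

def candidates : Option (Fin n) → List (Fin n × Fin n)
  | some v => (List.finRange n).map (v, ·)
  | none => List.finRange n ×ˢ List.finRange n

def isFree (mask : ℕ) (a : Fin n × Fin n) : Bool :=
  decide (G.Adj a.1 a.2) && !mask.testBit (edgeIndex a.1 a.2)

def legalMoves (mask : ℕ) (p : Option (Fin n)) : List (Fin n × Fin n) :=
  (candidates p).filter (isFree G mask)

/-- A bounded search for `P2ForcesWithin` on graphs with vertex set `Fin n`. A position is
encoded by whether Player 2 is to move, the bit mask of used edges, the vertex where the next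
move must start (`none` if it is unconstrained) and the current vertex of the other player. -/
def p2ForcesB : ℕ → Bool → ℕ → Option (Fin n) → Option (Fin n) → Bool
  | 0, _, _, _, _ => false
  | f + 1, p2ToMove, mask, p, q =>
    if p2ToMove then
      (legalMoves G mask p).any fun a => p2ForcesB f false (mask ||| edgeBits a.1 a.2) q (some a.2)
    else
      (legalMoves G mask p).all fun a => p2ForcesB f true (mask ||| edgeBits a.1 a.2) q (some a.2)

variable {G}

theorem edgeIndex_inj {a b c d : Fin n} : edgeIndex a b = edgeIndex c d ↔ (a, b) = (c, d) := by
  rw [edgeIndex, edgeIndex, Fin.val_inj, finProdFinEquiv.apply_eq_iff_eq]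

theorem testBit_edgeBits {a b c d : Fin n} :
    (edgeBits a b).testBit (edgeIndex c d) = true ↔ s(a, b) = s(c, d) := by
  simp only [edgeBits, Nat.testBit_or, Nat.testBit_two_pow, Bool.or_eq_true, decide_eq_true_eq,
    edgeIndex_inj, Sym2.eq_iff, Prod.mk.injEq]
  tauto

theorem usedMask_append (l : List (Fin n × Fin n)) (a : Fin n × Fin n) :
    usedMask (l ++ [a]) = usedMask l ||| edgeBits a.1 a.2 := by
  simp [usedMask]

theorem testBit_usedMask {l : List (Fin n × Fin n)} {a b : Fin n} :
    (usedMask l).testBit (edgeIndex a b) = true ↔ s(a, b) ∈ l.map (fun m => s(m.1, m.2)) := by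
  induction l using List.reverseRecOn with
  | nil => simp [usedMask]
  | append_singleton l m ih =>
    rw [usedMask_append, Nat.testBit_or, Bool.or_eq_true, ih, testBit_edgeBits]
    simp [eq_comm]

theorem mem_candidates {p : Option (Fin n)} {a : Fin n × Fin n} :
    a ∈ candidates p ↔ ∀ v ∈ p, a.1 = v := by
  obtain ⟨u, w⟩ := a
  cases p <;> simp [candidates, List.mem_product, eq_comm]

theorem isFree_usedMask {l : List (Fin n × Fin n)} {a : Fin n × Fin n} :
    isFree G (usedMask l) a = true ↔
      G.Adj a.1 a.2 ∧ s(a.1, a.2) ∉ l.map (fun m => s(m.1, m.2)) := by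
  rw [isFree, Bool.and_eq_true, decide_eq_true_iff, Bool.not_eq_true', ← Bool.not_eq_true,
    testBit_usedMask]

theorem mem_legalMoves_iff {l : List (Fin n × Fin n)} (hl : ValidPlay G l)
    {a : Fin n × Fin n} :
    a ∈ legalMoves G (usedMask l) (nextStart l) ↔ ValidPlay G (l ++ [a]) := by
  rw [legalMoves, List.mem_filter, mem_candidates, isFree_usedMask, validPlay_append_iff]
  tauto

theorem p2ForcesWithin_of_p2ForcesB {f : ℕ} {l : List (Fin n × Fin n)} (hl : ValidPlay G l)
    (h : p2ForcesB G f (l.length % 2 = 1) (usedMask l) (nextStart l) (lastEnd l) = true) :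
    P2ForcesWithin G f l := by
  induction f generalizing l with
  | zero => simp [p2ForcesB] at h
  | succ f ih =>
    have next : ∀ a, ValidPlay G (l ++ [a]) →
        p2ForcesB G f (l.length % 2 = 0) (usedMask l ||| edgeBits a.1 a.2) (lastEnd l)
          (some a.2) →
        P2ForcesWithin G f (l ++ [a]) := by
      intro a ha hwin
      have parity : (l.length + 1) % 2 = 1 ↔ l.length % 2 = 0 := by omega
      exact ih ha (by simpa [usedMask_append, parity] using hwin)
    rw [P2ForcesWithin]
    by_cases hodd : l.length % 2 = 1
    · simp only [p2ForcesB, hodd, decide_true, if_true, List.any_eq_true,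
        mem_legalMoves_iff hl] at h
      obtain ⟨a, ha, hwin⟩ := h
      exact if_pos hodd ▸
        ⟨a, ha, next a ha (by simpa [show l.length % 2 ≠ 0 by omega] using hwin)⟩
    · simp only [p2ForcesB, hodd, decide_false, Bool.false_eq_true, if_false, List.all_eq_true,
        mem_legalMoves_iff hl] at h
      exact if_neg hodd ▸ fun a ha =>
        next a ha (by simpa [show l.length % 2 = 0 by omega] using h a ha)

end Search

end TrailTrap

/-- Player 2 has a winning strategy in Trail Trap on the complete graph `K₅`. -/
theorem stmt_7 : P2Win (⊤ : SimpleGraph (Fin 5)) :=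
  TrailTrap.p2Win_of_p2ForcesWithin (f := 11) <|
    TrailTrap.p2ForcesWithin_of_p2ForcesB (by simp [ValidPlay]) (by decide +kernel)
end

section
/- For every even n ≥ 3, the prism graph Cₙ □ K₂ (the Cartesian product of the n-cycle with a single edge) has an involutive automorphism with no fixed edges, and hence is P2-win in Trail Trap. -/
open SimpleGraph

/-! Player 2 answers every move `u → v` of Player 1 by `φ u → φ v`. Since `φ` is an involutive
automorphism, the edges played so far come in pairs `{e, φ e}`, so the mirror image of Player 1's
last edge is still unused unless it is that edge itself, which the absence of fixed edges excludes;
and `φ` carries Player 1's trail onto one continuing Player 2's. Hence Player 2 can always move.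
On the prism `Cₙ □ K₂` with `n` even, such a `φ` is the half-turn of the cycle combined with the
swap of the two layers. -/

theorem List.Nodup.apply_getElem_notMem_of_mirrored {α : Type*} {g : α → α}
    (hg : Function.Involutive g) {E : List α} (hE : E.Nodup) {k : ℕ} (hlen : E.length = 2 * k + 1)
    (hmirror : ∀ j (hj : 2 * j + 1 < E.length), E[2 * j + 1] = g E[2 * j])
    (hfix : g (E[2 * k]'(by omega)) ≠ E[2 * k]'(by omega)) :
    g (E[2 * k]'(by omega)) ∉ E := by
  intro hmem
  obtain ⟨i, hi, hEi⟩ := List.mem_iff_getElem.1 hmem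
  obtain ⟨j, rfl | rfl⟩ := Nat.even_or_odd' i
  · have hjk : j ≠ k := by rintro rfl; exact hfix hEi.symm
    have hnext := hmirror j (by omega)
    rw [hEi, hg] at hnext
    have := hE.getElem_inj_iff.1 hnext
    omega
  · have hprev := hmirror j hi
    rw [hEi] at hprev
    have := hE.getElem_inj_iff.1 (hg.injective hprev)
    omega

namespace SimpleGraph

variable {V : Type*}

theorem ValidPlay.append_singleton {G : SimpleGraph V} {l : List (V × V)} {m : V × V}
    (hl : ValidPlay G l) (hadj : G.Adj m.1 m.2)
    (hnew : s(m.1, m.2) ∉ l.map fun e => s(e.1, e.2))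
    (htrail : ∀ i (hi : i + 2 = l.length), m.1 = (l[i]'(by omega)).2) :
    ValidPlay G (l ++ [m]) := by
  obtain ⟨hadjl, hnd, htr⟩ := hl
  refine ⟨?_, ?_, fun i hi => ?_⟩
  · simp only [List.mem_append, List.mem_singleton]
    rintro x (hx | rfl)
    exacts [hadjl x hx, hadj]
  · rw [List.map_append, List.map_singleton, List.nodup_append]
    exact ⟨hnd, List.nodup_singleton _,
      fun e he e' he' hee' => hnew (List.mem_singleton.1 he' ▸ hee' ▸ he)⟩
  · have hi' : i + 2 < l.length + 1 := by simpa using hi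
    simp only [List.get_eq_getElem]
    rw [List.getElem_append_left (i := i) (by omega)]
    rcases Nat.lt_or_ge (i + 2) l.length with h | h
    · rw [List.getElem_append_left h]
      exact htr i h
    · rw [List.getElem_concat_length (by omega)]
      exact htrail i (by omega)

theorem FollowsAt.append_singleton {σ : List (V × V) → V × V} {t : ℕ} {l : List (V × V)}
    {m : V × V} (hl : FollowsAt σ t l) (hm : l.length % 2 = t → m = σ l) :
    FollowsAt σ t (l ++ [m]) := by
  intro i hi hit
  have hi' : i < l.length + 1 := by simpa using hi
  simp only [List.get_eq_getElem]
  rcases Nat.lt_or_ge i l.length with h | h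
  · rw [List.getElem_append_left h, List.take_append_of_le_length h.le]
    exact hl i h hit
  · obtain rfl : i = l.length := by omega
    rw [List.getElem_concat_length rfl, List.take_left' rfl]
    exact hm hit

-- Player 2 never moves on the empty play, so the default value is irrelevant.
noncomputable def mirrorStrategy [Nonempty V] (φ : V → V) (l : List (V × V)) : V × V :=
  (l.getLast?.map (Prod.map φ φ)).getD (Classical.arbitrary _)

theorem mirrorStrategy_of_getLast? [Nonempty V] {φ : V → V} {l : List (V × V)} {m : V × V}
    (h : l.getLast? = some m) : mirrorStrategy φ l = Prod.map φ φ m := by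
  simp [mirrorStrategy, h]

theorem FollowsAt.getElem_odd_of_mirrorStrategy [Nonempty V] {φ : V → V} {l : List (V × V)}
    (h : FollowsAt (mirrorStrategy φ) 1 l) (j : ℕ) (hj : 2 * j + 1 < l.length) :
    l[2 * j + 1] = Prod.map φ φ l[2 * j] := by
  have hfol := h (2 * j + 1) hj (by omega)
  simp only [List.get_eq_getElem] at hfol
  rw [hfol]
  apply mirrorStrategy_of_getLast?
  rw [List.getLast?_eq_getElem?]
  simp [Nat.min_eq_left hj.le]

def Iso.EdgeFixedPointFree {G : SimpleGraph V} (φ : G ≃g G) : Prop :=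
  ∀ u v, G.Adj u v → s(φ u, φ v) ≠ s(u, v)

theorem p2Win_of_involutive_of_edgeFixedPointFree [Nonempty V] {G : SimpleGraph V}
    (φ : G ≃g G) (hinv : Function.Involutive φ) (hfree : φ.EdgeFixedPointFree) : P2Win G := by
  refine ⟨mirrorStrategy φ, fun l hl hfol hstuck => ?_⟩
  by_contra hodd
  obtain ⟨k, hk⟩ : ∃ k, l.length = 2 * k + 1 := ⟨l.length / 2, by omega⟩
  have hmirror := hfol.getElem_odd_of_mirrorStrategy
  set a := l[2 * k]
  have ha : G.Adj a.1 a.2 := hl.1 a (List.getElem_mem _)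
  have hlast : l.getLast? = some a := by
    rw [List.getLast?_eq_getElem?, List.getElem?_eq_getElem (by omega)]
    simp [a, hk]
  refine hstuck (Prod.map φ φ a) ⟨hl.append_singleton (φ.map_adj_iff.2 ha) ?_ ?_,
    hfol.append_singleton fun _ => (mirrorStrategy_of_getLast? hlast).symm⟩
  · have hsym : Function.Involutive (Sym2.map φ) := fun e => by
      rw [Sym2.map_map, hinv.comp_self, Sym2.map_id, id]
    have := List.Nodup.apply_getElem_notMem_of_mirrored hsym hl.2.1 (k := k) (by simpa using hk)
      (fun j hj => by simp [hmirror j (by simpa using hj)]) (by simpa using hfree _ _ ha)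
    simpa using this
  · intro i hi
    obtain ⟨j, rfl⟩ : ∃ j, i = 2 * j + 1 := ⟨k - 1, by omega⟩
    have htrail := hl.2.2 (2 * j) (by omega)
    simp only [List.get_eq_getElem, show 2 * j + 2 = 2 * k by omega] at htrail
    rw [hmirror j (by omega)]
    simp [a, htrail]

variable {α α' β β' : Type*} {G : SimpleGraph α} {G' : SimpleGraph α'} {H : SimpleGraph β}
  {H' : SimpleGraph β'}

def Iso.boxProd (f : G ≃g G') (g : H ≃g H') : (G □ H) ≃g (G' □ H') where
  toEquiv := f.toEquiv.prodCongr g.toEquiv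
  map_rel_iff' := or_congr (and_congr f.map_adj_iff g.injective.eq_iff)
    (and_congr g.map_adj_iff f.injective.eq_iff)

theorem Iso.boxProd_apply (f : G ≃g G') (g : H ≃g H') (x : α × β) :
    f.boxProd g x = (f x.1, g x.2) := rfl

theorem Iso.boxProd_involutive {f : G ≃g G} {g : H ≃g H} (hf : Function.Involutive f)
    (hg : Function.Involutive g) : Function.Involutive (f.boxProd g) :=
  fun x => Prod.ext (hf x.1) (hg x.2)

theorem Iso.boxProd_edgeFixedPointFree {f : G ≃g G} {g : H ≃g H} (hf : ∀ a, f a ≠ a)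
    (hg : ∀ b, g b ≠ b) : (f.boxProd g).EdgeFixedPointFree := by
  intro x y hxy
  rw [Ne, Sym2.eq_iff]
  rintro (⟨hx, -⟩ | ⟨hx, -⟩) <;> rw [boxProd_apply, Prod.ext_iff] at hx
  · exact hf x.1 hx.1
  · rcases boxProd_adj.1 hxy with ⟨-, h2⟩ | ⟨-, h1⟩
    · exact hg x.2 (h2 ▸ hx.2)
    · exact hf x.1 (h1 ▸ hx.1)

def cycleGraph.rotate {n : ℕ} [NeZero n] (c : Fin n) : cycleGraph n ≃g cycleGraph n where
  toEquiv := Equiv.addRight c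
  map_rel_iff' := by simp [cycleGraph_adj']

theorem cycleGraph.exists_involutive_fixedPointFree {n : ℕ} (hn : Even n) (h2 : 2 ≤ n) :
    ∃ φ : cycleGraph n ≃g cycleGraph n, Function.Involutive φ ∧ ∀ x, φ x ≠ x := by
  obtain ⟨k, rfl⟩ := hn
  have : NeZero (k + k) := ⟨by omega⟩
  let c : Fin (k + k) := ⟨k, by omega⟩
  have hcc : c + c = 0 := Fin.ext (by simp [Fin.val_add, c])
  refine ⟨cycleGraph.rotate c, fun x => ?_, fun x => ?_⟩
  · show x + c + c = x
    rw [add_assoc, hcc, add_zero]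
  · show x + c ≠ x
    simp only [ne_eq, add_eq_left, Fin.ext_iff, Fin.coe_ofNat_eq_mod, Nat.zero_mod, c]
    omega

end SimpleGraph

/-- For every even `n ≥ 3`, the prism graph `Cₙ □ K₂` has an involutive automorphism
with no fixed edges, and hence is P2-win in Trail Trap. -/
theorem stmt_9 (n : ℕ) (h3 : 3 ≤ n) (he : Even n) :
    (∃ φ : (cycleGraph n □ (⊤ : SimpleGraph (Fin 2))) ≃g
        (cycleGraph n □ (⊤ : SimpleGraph (Fin 2))),
      (∀ v, φ (φ v) = v) ∧
      ∀ u v, (cycleGraph n □ (⊤ : SimpleGraph (Fin 2))).Adj u v →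
        s(φ u, φ v) ≠ s(u, v)) ∧
    P2Win (cycleGraph n □ (⊤ : SimpleGraph (Fin 2))) := by
  have : NeZero n := ⟨by omega⟩
  -- `K₂ = C₂`, so the swap of the two layers is a half-turn as well.
  rw [← cycleGraph_two_eq_top]
  obtain ⟨α, hα, hα'⟩ := cycleGraph.exists_involutive_fixedPointFree he (by omega)
  obtain ⟨β, hβ, hβ'⟩ := cycleGraph.exists_involutive_fixedPointFree even_two le_rfl
  have hinv := Iso.boxProd_involutive hα hβ
  have hfree := Iso.boxProd_edgeFixedPointFree hα' hβ'
  exact ⟨⟨_, hinv, hfree⟩, p2Win_of_involutive_of_edgeFixedPointFree _ hinv hfree⟩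
end

section
/- Let G be a finite cubic graph on n vertices with a fixed vertex w, and let Ĝ be obtained from G by adding a new vertex u adjacent only to w. Then Ĝ has a trail of length n + 2 if and only if G has a trail of length n + 1 starting at w. -/
/-!
If a trail visits a vertex `v` `c` times, it uses `2c` edge-ends at `v`, except for one fewer at
each end of the trail; as a trail never reuses an edge, `2c ≤ deg v + [v = start] + [v = end]`.
In a graph of maximum degree `2k + 1` this allows `k` visits per vertex plus one extra visit at each
end, so a trail visits at most `kn + 2` vertices and has length at most `kn + 1`.

In `Ĝ` the new vertex `u` has degree one, so a trail through `u` starts or ends there and never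
returns; dropping the edge `uw` leaves a trail of `G` starting at `w`. A trail of `Ĝ` avoiding `u`
is a trail of `G` and, `G` being cubic, has length at most `n + 1`. Conversely, prepending `uw` to
a trail of `G` starting at `w` gives a trail of `Ĝ` one edge longer.
-/

open SimpleGraph

/-- The graph `Ĝ` obtained from `G` by adding one new vertex (`none`) adjacent only to
the vertex `w` of `G`. -/
def addPendant {V : Type*} (G : SimpleGraph V) (w : V) : SimpleGraph (Option V) where
  Adj x y := match x, y with
    | some a, some b => G.Adj a b
    | none, some a => a = w
    | some a, none => a = w
    | none, none => False
  symm := by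
    constructor
    rintro (_ | a) (_ | b) h <;> simp_all <;> exact h.symm
  loopless := by
    constructor
    rintro (_ | a) h <;> simp_all

namespace SimpleGraph.Walk

variable {V : Type*} {G : SimpleGraph V} {x y : V}

theorem two_mul_count_support_eq [DecidableEq V] (p : G.Walk x y) (v : V) :
    2 * p.support.count v =
      p.edges.countP (v ∈ ·) + (if v = x then 1 else 0) + (if v = y then 1 else 0) := by
  induction p with
  | @nil u => by_cases h : v = u <;> simp [h, Ne.symm]
  | cons h q ih =>
    have := h.ne
    simp only [support_cons, edges_cons, List.count_cons, List.countP_cons, Sym2.mem_iff]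
    grind

theorem IsTrail.countP_mem_edges_le_degree [DecidableEq V] {p : G.Walk x y} (hp : p.IsTrail)
    (v : V) [Fintype (G.neighborSet v)] : p.edges.countP (v ∈ ·) ≤ G.degree v := by
  rw [List.countP_eq_length_filter, ← card_incidenceFinset_eq_degree,
    ← List.toFinset_card_of_nodup (hp.edges_nodup.filter _)]
  refine Finset.card_le_card fun e he => ?_
  simp only [List.mem_toFinset, List.mem_filter, decide_eq_true_eq] at he
  exact (mem_incidenceFinset _ _ _).mpr ⟨p.edges_subset_edgeSet he.1, he.2⟩

theorem IsTrail.two_mul_count_support_le [DecidableEq V] {p : G.Walk x y} (hp : p.IsTrail)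
    (v : V) [Fintype (G.neighborSet v)] :
    2 * p.support.count v ≤ G.degree v + (if v = x then 1 else 0) + (if v = y then 1 else 0) := by
  have := hp.countP_mem_edges_le_degree v
  rw [two_mul_count_support_eq]
  omega

theorem IsTrail.length_le_of_degree_le [Fintype V] [DecidableRel G.Adj] {k : ℕ}
    (hG : ∀ v, G.degree v ≤ 2 * k + 1) {p : G.Walk x y} (hp : p.IsTrail) :
    p.length ≤ k * Fintype.card V + 1 := by
  classical
  have hcount (v : V) :
      p.support.count v ≤ k + ((if v = x then 1 else 0) + (if v = y then 1 else 0)) := by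
    have := hp.two_mul_count_support_le v
    have := hG v
    omega
  suffices p.length + 1 ≤ k * Fintype.card V + 2 by omega
  calc p.length + 1
      = ∑ v, p.support.count v := by
        have := Multiset.sum_count_eq_card (s := .univ) (m := (p.support : Multiset V)) (by simp)
        simpa using this.symm
    _ ≤ ∑ v, (k + ((if v = x then 1 else 0) + (if v = y then 1 else 0))) :=
        Finset.sum_le_sum fun v _ => hcount v
    _ = k * Fintype.card V + 2 := by simp [Finset.sum_add_distrib, mul_comm]

theorem IsTrail.notMem_support_of_cons {u v : V} {h : G.Adj u v} {p : G.Walk v y}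
    (hp : (p.cons h).IsTrail) [Fintype (G.neighborSet u)] (hu : G.degree u ≤ 1) :
    u ∉ p.support := by
  classical
  have := hp.two_mul_count_support_le u
  rw [support_cons, List.count_cons_self] at this
  grind

theorem IsTrail.eq_or_eq_of_mem_support {p : G.Walk x y} (hp : p.IsTrail) {v : V}
    [Fintype (G.neighborSet v)] (hv : G.degree v ≤ 1) (hmem : v ∈ p.support) :
    v = x ∨ v = y := by
  classical
  have := hp.two_mul_count_support_le v
  have := List.count_pos_iff.mpr hmem
  grind

end SimpleGraph.Walk

section AddPendant

variable {V : Type*} {G : SimpleGraph V} {w : V}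

@[simp]
lemma addPendant_adj_none {c : Option V} : (addPendant G w).Adj none c ↔ c = some w := by
  cases c <;> simp [addPendant, eq_comm]

instance : Fintype ((addPendant G w).neighborSet none) :=
  Fintype.ofFinset {some w} fun c => by simp

lemma addPendant_degree_none [Fintype ((addPendant G w).neighborSet none)] :
    (addPendant G w).degree none = 1 := by
  rw [← card_neighborSet_eq_degree, Fintype.card_eq_one_iff]
  exact ⟨⟨some w, by simp⟩, fun ⟨c, hc⟩ => Subtype.ext (by simpa using hc)⟩

variable (G w) in
def addPendantEmbedding : G ↪g addPendant G w := ⟨Function.Embedding.some, Iff.rfl⟩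

lemma exists_map_eq_of_none_notMem_support :
    ∀ {a b : V} (p : (addPendant G w).Walk (some a) (some b)), none ∉ p.support →
      ∃ q : G.Walk a b, q.map (addPendantEmbedding G w).toHom = p
  | _, _, .nil, _ => ⟨.nil, rfl⟩
  | _, _, .cons (v := none) _ p, hp => absurd (by simp) hp
  | _, _, .cons (v := some _) h p, hp => by
    obtain ⟨q, rfl⟩ := exists_map_eq_of_none_notMem_support p (by simp_all)
    exact ⟨.cons h q, rfl⟩

lemma exists_isTrail_of_none_notMem_support {a b : V}
    (p : (addPendant G w).Walk (some a) (some b)) (hp : none ∉ p.support) (ht : p.IsTrail) :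
    ∃ q : G.Walk a b, q.IsTrail ∧ q.length = p.length := by
  obtain ⟨q, hq⟩ := exists_map_eq_of_none_notMem_support p hp
  exact ⟨q, (hq ▸ ht).of_map, hq ▸ (q.length_map _).symm⟩

lemma exists_isTrail_of_isTrail_from_none {b : Option V} {m : ℕ}
    (t : (addPendant G w).Walk none b) (ht : t.IsTrail) (hlen : t.length = m + 1) :
    ∃ (b' : V) (q : G.Walk w b'), q.IsTrail ∧ q.length = m := by
  cases t with
  | nil => simp at hlen
  | cons h t =>
    obtain rfl := addPendant_adj_none.mp h
    have hnone : none ∉ t.support := ht.notMem_support_of_cons addPendant_degree_none.le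
    cases b with
    | none => exact absurd t.end_mem_support hnone
    | some b =>
      obtain ⟨q, hq, hql⟩ := exists_isTrail_of_none_notMem_support t hnone ht.of_cons
      exact ⟨b, q, hq, by simpa [hql] using hlen⟩

lemma exists_isTrail_from_none_of_isTrail {b : V} (q : G.Walk w b) (hq : q.IsTrail) :
    ∃ (b' : Option V) (t : (addPendant G w).Walk none b'),
      t.IsTrail ∧ t.length = q.length + 1 := by
  let f := addPendantEmbedding G w
  have h : (addPendant G w).Adj none (f w) := addPendant_adj_none.mpr rfl
  have ht : ((q.map f.toHom).cons h).IsTrail := by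
    rw [Walk.isTrail_cons]
    refine ⟨hq.map f.injective, fun he => ?_⟩
    simpa [Walk.support_map, f, addPendantEmbedding] using Walk.fst_mem_support_of_mem_edges _ he
  exact ⟨_, _, ht, by simp⟩

end AddPendant

theorem stmt_17_general {V : Type*} [Fintype V] (G : SimpleGraph V)
    [DecidableRel G.Adj] (hcubic : ∀ v : V, G.degree v = 3) (w : V) :
    (∃ (a b : Option V) (t : (addPendant G w).Walk a b),
        t.IsTrail ∧ t.length = Fintype.card V + 2) ↔
    (∃ (b : V) (t : G.Walk w b), t.IsTrail ∧ t.length = Fintype.card V + 1) := by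
  constructor
  · rintro ⟨a, b, t, ht, hlen⟩
    rcases a with _ | a
    · exact exists_isTrail_of_isTrail_from_none t ht hlen
    rcases b with _ | b
    · exact exists_isTrail_of_isTrail_from_none t.reverse ht.reverse (by simpa using hlen)
    have hnone : none ∉ t.support := fun h => by
      simpa using ht.eq_or_eq_of_mem_support addPendant_degree_none.le h
    obtain ⟨q, hq, hql⟩ := exists_isTrail_of_none_notMem_support t hnone ht
    have := hq.length_le_of_degree_le (k := 1) (by simp [hcubic])
    omega
  · rintro ⟨b, q, hq, hlen⟩
    obtain ⟨b', t, ht, htl⟩ := exists_isTrail_from_none_of_isTrail q hq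
    exact ⟨none, b', t, ht, by omega⟩

/-- Let `G` be a finite cubic graph on `n` vertices with a fixed vertex `w`, and let
`Ĝ` be obtained by adding a new vertex `u` adjacent only to `w`. Then `Ĝ` has a trail
of length `n + 2` iff `G` has a trail of length `n + 1` starting at `w`. -/
theorem stmt_17 {V : Type*} [Fintype V] [DecidableEq V] (G : SimpleGraph V)
    [DecidableRel G.Adj] (hcubic : ∀ v : V, G.degree v = 3) (w : V) :
    (∃ (a b : Option V) (t : (addPendant G w).Walk a b),
        t.IsTrail ∧ t.length = Fintype.card V + 2) ↔
    (∃ (b : V) (t : G.Walk w b), t.IsTrail ∧ t.length = Fintype.card V + 1) :=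
  stmt_17_general G hcubic w
end
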